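/- Let $(L,\leq,0,1)$ be a bounded lattice, $e\in L\setminus\{0,1\}$, $I_e=\{x: x\parallel e\}$, and let $T_e$ be a t-norm on $[0,e]$. Define $U_T(x,y)=T_e(x,y)$ on $[0,e]^2$; $1$ on $(e,1]^2$; $y$ on $[0,e]\times I_e$; $x$ on $I_e\times[0,e]$; $x\vee y$ otherwise. If $U_T$ is associative, then for all $y,z\in I_e$, either $y\vee z\in I_e$ or $y\vee z=1$. -/

import Mathlib

/-!
If `y, z` are incomparable with `e` but `w = y ⊔ z` lies strictly above `e`, then `U y z = w`,
`U w y = U w z = w` and `U w w = ⊤`, so associativity `U (U w y) z = U w (U y z)` reads `w = ⊤`.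
-/

open Classical in
noncomputable def uninormOfTNorm {L : Type*} [Lattice L] [BoundedOrder L] (e : L)
    (T : L → L → L) (x y : L) : L :=
  if x ≤ e ∧ y ≤ e then T x y
  else if e < x ∧ e < y then ⊤
  else if x ≤ e ∧ (¬ y ≤ e ∧ ¬ e ≤ y) then y
  else if (¬ x ≤ e ∧ ¬ e ≤ x) ∧ y ≤ e then x
  else x ⊔ y

namespace uninormOfTNorm

variable {L : Type*} [Lattice L] [BoundedOrder L] {e x y : L} {T : L → L → L}

theorem apply_of_incompRel (hx : IncompRel (· ≤ ·) x e) (hy : IncompRel (· ≤ ·) y e) :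
    uninormOfTNorm e T x y = x ⊔ y := by
  rw [uninormOfTNorm, if_neg (fun h => hx.1 h.1), if_neg (fun h => hx.2 h.1.le),
    if_neg (fun h => hx.1 h.1), if_neg (fun h => hy.1 h.2)]

theorem apply_of_lt_of_incompRel (hx : e < x) (hy : IncompRel (· ≤ ·) y e) :
    uninormOfTNorm e T x y = x ⊔ y := by
  rw [uninormOfTNorm, if_neg (fun h => hx.not_ge h.1), if_neg (fun h => hy.2 h.2.le),
    if_neg (fun h => hx.not_ge h.1), if_neg (fun h => h.1.2 hx.le)]

theorem apply_of_lt_of_lt (hx : e < x) (hy : e < y) : uninormOfTNorm e T x y = ⊤ := by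
  rw [uninormOfTNorm, if_neg (fun h => hx.not_ge h.1), if_pos ⟨hx, hy⟩]

theorem sup_eq_top_of_lt_sup (hassoc : ∀ x y z, uninormOfTNorm e T (uninormOfTNorm e T x y) z =
      uninormOfTNorm e T x (uninormOfTNorm e T y z))
    {z : L} (hy : IncompRel (· ≤ ·) y e) (hz : IncompRel (· ≤ ·) z e) (hlt : e < y ⊔ z) :
    y ⊔ z = ⊤ := by
  have hwy : uninormOfTNorm e T (y ⊔ z) y = y ⊔ z := by
    rw [apply_of_lt_of_incompRel hlt hy, sup_eq_left.mpr le_sup_left]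
  have hwz : uninormOfTNorm e T (y ⊔ z) z = y ⊔ z := by
    rw [apply_of_lt_of_incompRel hlt hz, sup_eq_left.mpr le_sup_right]
  simpa [hwy, hwz, apply_of_incompRel hy hz, apply_of_lt_of_lt hlt hlt] using
    hassoc (y ⊔ z) y z

end uninormOfTNorm

open Classical in
theorem stmt9_general {L : Type*} [Lattice L] [BoundedOrder L] (e : L)
    (T : L → L → L)
    (U : L → L → L)
    (hU : ∀ x y, U x y =
      if x ≤ e ∧ y ≤ e then T x y
      else if e < x ∧ e < y then (⊤ : L)
      else if x ≤ e ∧ (¬ y ≤ e ∧ ¬ e ≤ y) then y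
      else if (¬ x ≤ e ∧ ¬ e ≤ x) ∧ y ≤ e then x
      else x ⊔ y)
    (hassoc : ∀ x y z, U (U x y) z = U x (U y z)) :
    (∀ y z, (¬ y ≤ e ∧ ¬ e ≤ y) → (¬ z ≤ e ∧ ¬ e ≤ z) →
      (¬ y ⊔ z ≤ e ∧ ¬ e ≤ y ⊔ z) ∨ y ⊔ z = ⊤) := by
  obtain rfl : U = uninormOfTNorm e T := funext₂ hU
  intro y z hy hz
  have hnle : ¬ y ⊔ z ≤ e := fun h => hy.1 (le_sup_left.trans h)
  by_cases hge : e ≤ y ⊔ z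
  · exact .inr (uninormOfTNorm.sup_eq_top_of_lt_sup hassoc hy hz (hge.lt_of_not_ge hnle))
  · exact .inl ⟨hnle, hge⟩

open Classical in
theorem stmt9 {L : Type*} [Lattice L] [BoundedOrder L] (e : L)
    (he0 : e ≠ ⊥) (he1 : e ≠ ⊤)
    (T : L → L → L)
    (hTcl : ∀ x y, x ≤ e → y ≤ e → T x y ≤ e)
    (hTcomm : ∀ x y, x ≤ e → y ≤ e → T x y = T y x)
    (hTassoc : ∀ x y z, x ≤ e → y ≤ e → z ≤ e → T (T x y) z = T x (T y z))
    (hTmono : ∀ x y z, x ≤ e → y ≤ e → z ≤ e → x ≤ y → T x z ≤ T y z)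
    (hTe : ∀ x, x ≤ e → T e x = x ∧ T x e = x)
    (U : L → L → L)
    (hU : ∀ x y, U x y =
      if x ≤ e ∧ y ≤ e then T x y
      else if e < x ∧ e < y then (⊤ : L)
      else if x ≤ e ∧ (¬ y ≤ e ∧ ¬ e ≤ y) then y
      else if (¬ x ≤ e ∧ ¬ e ≤ x) ∧ y ≤ e then x
      else x ⊔ y)
    (hassoc : ∀ x y z, U (U x y) z = U x (U y z)) :
    (∀ y z, (¬ y ≤ e ∧ ¬ e ≤ y) → (¬ z ≤ e ∧ ¬ e ≤ z) →
      (¬ y ⊔ z ≤ e ∧ ¬ e ≤ y ⊔ z) ∨ y ⊔ z = ⊤) :=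
  stmt9_general e T U hU hassoc
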